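/- arXiv:2501.00496 — 2 statements merged into one kernel-verified Lean document; each statement's English description precedes it below -/
import Mathlib

section
/- Equivalence of LSkG and LSkT, first direction: for any LSkG derivation of S | Γ ⊢ C, there exists an LSkT derivation of ⟦s(S) | Γ⟧ ⊢ C, where s maps an empty stoup to I and a formula stoup to itself, and ⟦T | Γ⟧ is the left-associated tree obtained by repeatedly pairing: ⟦T | []⟧ = T and ⟦T | B,Γ⟧ = ⟦(T,B) | Γ⟧. -/
/-- Formulae of left skew monoidal closed logic: atoms, unit I, ⊗, ⊸. -/
inductive Fma : Type
  | atom : ℕ → Fma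
  | I : Fma
  | tens : Fma → Fma → Fma
  | lolli : Fma → Fma → Fma

/-- Derivability in the stoup sequent calculus LSkG: `GDer S Γ A` means `S | Γ ⊢ A`. -/
inductive GDer : Option Fma → List Fma → Fma → Prop
  | ax {A} : GDer (some A) [] A
  | lolliL {A B C Γ Δ} : GDer none Γ A → GDer (some B) Δ C →
      GDer (some (Fma.lolli A B)) (Γ ++ Δ) C
  | IL {Γ C} : GDer none Γ C → GDer (some Fma.I) Γ C
  | tensL {A B Γ C} : GDer (some A) (B :: Γ) C → GDer (some (Fma.tens A B)) Γ C
  | pass {A Γ C} : GDer (some A) Γ C → GDer none (A :: Γ) C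
  | lolliR {S Γ A B} : GDer S (Γ ++ [A]) B → GDer S Γ (Fma.lolli A B)
  | IR : GDer none [] Fma.I
  | tensR {S Γ Δ A B} : GDer S Γ A → GDer none Δ B → GDer S (Γ ++ Δ) (Fma.tens A B)

/-- Trees: formulae, the empty tree, and pairing. -/
inductive Tr : Type
  | fma : Fma → Tr
  | emp : Tr
  | pair : Tr → Tr → Tr

/-- Contexts: trees with a single hole. -/
inductive Ctx : Type
  | hole : Ctx
  | pairL : Ctx → Tr → Ctx
  | pairR : Tr → Ctx → Ctx

/-- Substitution of a tree into the hole of a context. -/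
def plug : Ctx → Tr → Tr
  | Ctx.hole, U => U
  | Ctx.pairL C T, U => Tr.pair (plug C U) T
  | Ctx.pairR T C, U => Tr.pair T (plug C U)

/-- Derivability in the tree sequent calculus LSkT: `TDer T A` means `T ⊢ A`. -/
inductive TDer : Tr → Fma → Prop
  | ax {A} : TDer (Tr.fma A) A
  | IL {T C} : TDer (plug T Tr.emp) C → TDer (plug T (Tr.fma Fma.I)) C
  | IR : TDer Tr.emp Fma.I
  | tensL {T A B C} : TDer (plug T (Tr.pair (Tr.fma A) (Tr.fma B))) C →
      TDer (plug T (Tr.fma (Fma.tens A B))) C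
  | tensR {T U A B} : TDer T A → TDer U B → TDer (Tr.pair T U) (Fma.tens A B)
  | lolliL {T U A B C} : TDer U A → TDer (plug T (Tr.fma B)) C →
      TDer (plug T (Tr.pair (Tr.fma (Fma.lolli A B)) U)) C
  | lolliR {T A B} : TDer (Tr.pair T (Tr.fma A)) B → TDer T (Fma.lolli A B)
  | assoc {T U₀ U₁ U₂ C} : TDer (plug T (Tr.pair U₀ (Tr.pair U₁ U₂))) C →
      TDer (plug T (Tr.pair (Tr.pair U₀ U₁) U₂)) C
  | unitL {T U C} : TDer (plug T U) C → TDer (plug T (Tr.pair Tr.emp U)) C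
  | unitR {T U C} : TDer (plug T (Tr.pair U Tr.emp)) C → TDer (plug T U) C

/-- `T*`: turn a tree into a formula, replacing commas with ⊗ and `-` with `I`. -/
def Tr.star : Tr → Fma
  | Tr.fma A => A
  | Tr.emp => Fma.I
  | Tr.pair T U => Fma.tens T.star U.star

/-- `s(S)`: map an empty stoup to `I` and a formula stoup to itself. -/
def stp : Option Fma → Fma
  | none => Fma.I
  | some A => A

/-- `⟦T | Γ⟧`: the left-associated tree obtained by repeatedly pairing. -/
def enc : Tr → List Fma → Tr
  | T, [] => T
  | T, B :: Γ => enc (Tr.pair T (Tr.fma B)) Γ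

/-!
Induct on the LSkG derivation, reading an empty stoup as the empty tree `-` rather than as `I`;
a single `IL` at the root converts one reading into the other. Since `⟦T | Γ⟧` is `T` plugged
into a context determined by `Γ`, every LSkT rule acting on the stoup applies in place. The only
structural work is for `⊸L` and `⊗R`, whose premisses are concatenated: `(T, ⟦- | Γ⟧)` is turned
into `⟦T | Γ⟧` by repeated `assoc` followed by `unitR`.
-/

namespace Ctx

def comp : Ctx → Ctx → Ctx
  | hole, D => D
  | pairL C T, D => pairL (comp C D) T
  | pairR T C, D => pairR T (comp C D)

/-- The context `⟦[·] | Γ⟧`. -/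
def ofList : List Fma → Ctx
  | [] => hole
  | B :: Γ => comp (ofList Γ) (pairL hole (Tr.fma B))

end Ctx

theorem plug_comp (C D : Ctx) (U : Tr) : plug (C.comp D) U = plug C (plug D U) := by
  induction C <;> simp [Ctx.comp, plug, *]

theorem enc_eq_plug (Γ : List Fma) (T : Tr) : enc T Γ = plug (Ctx.ofList Γ) T := by
  induction Γ generalizing T with
  | nil => rfl
  | cons B Γ ih => simp [enc, Ctx.ofList, plug_comp, plug, ih]

theorem enc_append (T : Tr) (Γ Δ : List Fma) : enc T (Γ ++ Δ) = enc (enc T Γ) Δ := by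
  induction Γ generalizing T with
  | nil => rfl
  | cons B Γ ih => simp [enc, ih]

namespace TDer

theorem plug_enc_pair {K : Ctx} {T U : Tr} {C : Fma} (Γ : List Fma)
    (h : TDer (plug K (Tr.pair T (enc U Γ))) C) : TDer (plug K (enc (Tr.pair T U) Γ)) C := by
  induction Γ generalizing T U with
  | nil => exact h
  | cons B Γ ih =>
    have h' := ih (U := Tr.pair U (Tr.fma B)) h
    change TDer (plug K (enc (Tr.pair (Tr.pair T U) (Tr.fma B)) Γ)) C
    rw [enc_eq_plug, ← plug_comp] at h' ⊢
    exact assoc h'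

theorem plug_enc_of_pair_enc_emp {K : Ctx} {T : Tr} {C : Fma} (Γ : List Fma)
    (h : TDer (plug K (Tr.pair T (enc Tr.emp Γ))) C) : TDer (plug K (enc T Γ)) C := by
  have h' := plug_enc_pair Γ h
  rw [enc_eq_plug, ← plug_comp] at h' ⊢
  exact unitR h'

end TDer

def stoupTr : Option Fma → Tr
  | none => Tr.emp
  | some A => Tr.fma A

theorem GDer.tDer_enc_stoupTr {S : Option Fma} {Γ : List Fma} {C : Fma} (f : GDer S Γ C) :
    TDer (enc (stoupTr S) Γ) C := by
  induction f with
  | ax => exact TDer.ax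
  | @lolliL A B C Γ Δ _ _ ih₁ ih₂ =>
    rw [enc_append, enc_eq_plug Δ]
    apply TDer.plug_enc_of_pair_enc_emp Γ
    rw [enc_eq_plug Δ] at ih₂
    exact TDer.lolliL ih₁ ih₂
  | IL _ ih =>
    rw [enc_eq_plug] at ih ⊢
    exact TDer.IL ih
  | @tensL A B Γ C _ ih =>
    change TDer (enc (Tr.pair (Tr.fma A) (Tr.fma B)) Γ) C at ih
    change TDer (enc (Tr.fma (Fma.tens A B)) Γ) C
    rw [enc_eq_plug] at ih ⊢
    exact TDer.tensL ih
  | @pass A Γ C _ ih =>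
    change TDer (enc (Tr.pair Tr.emp (Tr.fma A)) Γ) C
    rw [enc_eq_plug] at ih ⊢
    exact TDer.unitL ih
  | lolliR _ ih =>
    rw [enc_append] at ih
    exact TDer.lolliR ih
  | IR => exact TDer.IR
  | tensR _ _ ih₁ ih₂ =>
    rw [enc_append]
    exact TDer.plug_enc_of_pair_enc_emp (K := Ctx.hole) _ (TDer.tensR ih₁ ih₂)

/-- From LSkG to LSkT: `S | Γ ⊢ C` yields `⟦s(S) | Γ⟧ ⊢ C`. -/
theorem G2T (S : Option Fma) (Γ : List Fma) (C : Fma) (f : GDer S Γ C) :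
    TDer (enc (Tr.fma (stp S)) Γ) C := by
  have h := f.tDer_enc_stoupTr
  cases S with
  | none =>
    rw [enc_eq_plug] at h ⊢
    exact TDer.IL h
  | some A => exact h
end

section
/- SkMBiCT and SkMBiCA are equivalent: (1) any SkMBiCA derivation of A ⊢ C yields an SkMBiCT derivation of A ⊢ C; (2) any SkMBiCT derivation of T ⊢ C yields an SkMBiCA derivation of T# ⊢ C, where T# replaces commas with ⊗ᴸ, semicolons with ⊗ᴿ, and the empty tree with I. -/
/-- Formulae of skew monoidal bi-closed logic:
atoms, unit I, left/right tensors and implications. -/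
inductive Fma2 : Type
  | atom : ℕ → Fma2
  | I : Fma2
  | tL : Fma2 → Fma2 → Fma2   -- A ⊗ᴸ B
  | lL : Fma2 → Fma2 → Fma2   -- A ⊸ᴸ B
  | tR : Fma2 → Fma2 → Fma2   -- A ⊗ᴿ B
  | lR : Fma2 → Fma2 → Fma2   -- A ⊸ᴿ B

/-- Derivability in the axiomatic calculus SkMBiCA: `ADer A B` means `A ⊢ B`. -/
inductive ADer : Fma2 → Fma2 → Prop
  | id {A} : ADer A A
  | comp {A B C} : ADer A B → ADer B C → ADer A C
  | tensL {A B C D} : ADer A C → ADer B D → ADer (Fma2.tL A B) (Fma2.tL C D)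
  | lolliL {A B C D} : ADer C A → ADer B D → ADer (Fma2.lL A B) (Fma2.lL C D)
  | lolliR {A B C D} : ADer C A → ADer B D → ADer (Fma2.lR A B) (Fma2.lR C D)
  | lam {A} : ADer (Fma2.tL Fma2.I A) A
  | rho {A} : ADer A (Fma2.tL A Fma2.I)
  | alpha {A B C} : ADer (Fma2.tL (Fma2.tL A B) C) (Fma2.tL A (Fma2.tL B C))
  | gamma {A B} : ADer (Fma2.tL A B) (Fma2.tR B A)
  | gammaInv {A B} : ADer (Fma2.tR A B) (Fma2.tL B A)
  | pi {A B C} : ADer (Fma2.tL A B) C → ADer A (Fma2.lL B C)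
  | piInv {A B C} : ADer A (Fma2.lL B C) → ADer (Fma2.tL A B) C
  | piR {A B C} : ADer (Fma2.tR A B) C → ADer A (Fma2.lR B C)
  | piRInv {A B C} : ADer A (Fma2.lR B C) → ADer (Fma2.tR A B) C

/-- Trees with two pairing modes: comma (for ⊗ᴸ) and semicolon (for ⊗ᴿ). -/
inductive Tr2 : Type
  | fma : Fma2 → Tr2
  | emp : Tr2
  | com : Tr2 → Tr2 → Tr2   -- (T , U)
  | sem : Tr2 → Tr2 → Tr2   -- (T ; U)

/-- Contexts: two-mode trees with a single hole. -/
inductive Ctx2 : Type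
  | hole : Ctx2
  | comL : Ctx2 → Tr2 → Ctx2
  | comR : Tr2 → Ctx2 → Ctx2
  | semL : Ctx2 → Tr2 → Ctx2
  | semR : Tr2 → Ctx2 → Ctx2

/-- Substitution of a tree into the hole of a context. -/
def plug2 : Ctx2 → Tr2 → Tr2
  | Ctx2.hole, U => U
  | Ctx2.comL C T, U => Tr2.com (plug2 C U) T
  | Ctx2.comR T C, U => Tr2.com T (plug2 C U)
  | Ctx2.semL C T, U => Tr2.sem (plug2 C U) T
  | Ctx2.semR T C, U => Tr2.sem T (plug2 C U)

/-- Derivability in the tree sequent calculus SkMBiCT: `BDer T A` means `T ⊢ A`. -/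
inductive BDer : Tr2 → Fma2 → Prop
  | ax {A} : BDer (Tr2.fma A) A
  | IR : BDer Tr2.emp Fma2.I
  | IL {T C} : BDer (plug2 T Tr2.emp) C → BDer (plug2 T (Tr2.fma Fma2.I)) C
  | tLL {T A B C} : BDer (plug2 T (Tr2.com (Tr2.fma A) (Tr2.fma B))) C →
      BDer (plug2 T (Tr2.fma (Fma2.tL A B))) C
  | tLR {T U A B} : BDer T A → BDer U B → BDer (Tr2.com T U) (Fma2.tL A B)
  | tRL {T A B C} : BDer (plug2 T (Tr2.sem (Tr2.fma A) (Tr2.fma B))) C →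
      BDer (plug2 T (Tr2.fma (Fma2.tR A B))) C
  | tRR {T U A B} : BDer T A → BDer U B → BDer (Tr2.sem T U) (Fma2.tR A B)
  | lLL {T U A B C} : BDer U A → BDer (plug2 T (Tr2.fma B)) C →
      BDer (plug2 T (Tr2.com (Tr2.fma (Fma2.lL A B)) U)) C
  | lLR {T A B} : BDer (Tr2.com T (Tr2.fma A)) B → BDer T (Fma2.lL A B)
  | lRL {T U A B C} : BDer U A → BDer (plug2 T (Tr2.fma B)) C →
      BDer (plug2 T (Tr2.sem (Tr2.fma (Fma2.lR A B)) U)) C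
  | lRR {T A B} : BDer (Tr2.sem T (Tr2.fma A)) B → BDer T (Fma2.lR A B)
  | assocL {T U₀ U₁ U₂ C} : BDer (plug2 T (Tr2.com U₀ (Tr2.com U₁ U₂))) C →
      BDer (plug2 T (Tr2.com (Tr2.com U₀ U₁) U₂)) C
  | assocR {T U₀ U₁ U₂ C} : BDer (plug2 T (Tr2.sem (Tr2.sem U₀ U₁) U₂)) C →
      BDer (plug2 T (Tr2.sem U₀ (Tr2.sem U₁ U₂))) C
  | comm {T U₀ U₁ C} : BDer (plug2 T (Tr2.com U₀ U₁)) C →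
      BDer (plug2 T (Tr2.sem U₁ U₀)) C
  | commInv {T U₀ U₁ C} : BDer (plug2 T (Tr2.sem U₁ U₀)) C →
      BDer (plug2 T (Tr2.com U₀ U₁)) C
  | unitLL {T U C} : BDer (plug2 T U) C → BDer (plug2 T (Tr2.com Tr2.emp U)) C
  | unitRL {T U C} : BDer (plug2 T (Tr2.com U Tr2.emp)) C → BDer (plug2 T U) C
  | unitLR {T U C} : BDer (plug2 T U) C → BDer (plug2 T (Tr2.sem U Tr2.emp)) C
  | unitRR {T U C} : BDer (plug2 T (Tr2.sem Tr2.emp U)) C → BDer (plug2 T U) C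

/-- `T#`: turn a two-mode tree into a formula, replacing commas with ⊗ᴸ,
semicolons with ⊗ᴿ, and `-` with `I`. -/
def Tr2.sharp : Tr2 → Fma2
  | Tr2.fma A => A
  | Tr2.emp => Fma2.I
  | Tr2.com T U => Fma2.tL T.sharp U.sharp
  | Tr2.sem T U => Fma2.tR T.sharp U.sharp

/-!
Direction (2) is soundness: `T#` is monotone under contexts, and each rule of SkMBiCT becomes
an SkMBiCA derivation, the structure of `⊗ᴿ` being that of `⊗ᴸ` transported along `γ`.
Direction (1) derives every axiom and rule of SkMBiCA in SkMBiCT; composition and residuation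
need cut admissibility. Cut is phrased as replacing one leaf `B` of a tree by a tree `Tl` with
`Tl ⊢ B`, and is proved by induction on `B`, then on the derivation containing the leaf; when that leaf is principal in a
left rule, a further induction on the derivation of `Tl ⊢ B` pushes the cut up to the right rule
introducing `B`, where it splits into cuts on the immediate subformulas.
-/

namespace Ctx2

def comp : Ctx2 → Ctx2 → Ctx2
  | hole, d => d
  | comL c t, d => comL (comp c d) t
  | comR t c, d => comR t (comp c d)
  | semL c t, d => semL (comp c d) t
  | semR t c, d => semR t (comp c d)

end Ctx2

@[simp]
theorem plug2_comp (c d : Ctx2) (X : Tr2) : plug2 (c.comp d) X = plug2 c (plug2 d X) := by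
  induction c <;> simp [Ctx2.comp, plug2, *]

/-- `LeafSubst B Tl S S'`: `S'` is `S` with one leaf `B` replaced by the tree `Tl`. -/
inductive LeafSubst (B : Fma2) (Tl : Tr2) : Tr2 → Tr2 → Prop
  | here : LeafSubst B Tl (.fma B) Tl
  | comL {S S' U : Tr2} : LeafSubst B Tl S S' → LeafSubst B Tl (.com S U) (.com S' U)
  | comR {U S S' : Tr2} : LeafSubst B Tl S S' → LeafSubst B Tl (.com U S) (.com U S')
  | semL {S S' U : Tr2} : LeafSubst B Tl S S' → LeafSubst B Tl (.sem S U) (.sem S' U)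
  | semR {U S S' : Tr2} : LeafSubst B Tl S S' → LeafSubst B Tl (.sem U S) (.sem U S')

namespace LeafSubst

variable {B : Fma2} {Tl : Tr2}

theorem plug2 {X X' : Tr2} (h : LeafSubst B Tl X X') :
    ∀ T : Ctx2, LeafSubst B Tl (plug2 T X) (plug2 T X')
  | .hole => h
  | .comL T _ => .comL (plug2 h T)
  | .comR _ T => .comR (plug2 h T)
  | .semL T _ => .semL (plug2 h T)
  | .semR _ T => .semR (plug2 h T)

theorem plug2_cases {T : Ctx2} {Y S' : Tr2} (h : LeafSubst B Tl (_root_.plug2 T Y) S') :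
    (∃ T' : Ctx2, S' = _root_.plug2 T' Y ∧
      ∀ X, LeafSubst B Tl (_root_.plug2 T X) (_root_.plug2 T' X)) ∨
    (∃ Y', S' = _root_.plug2 T Y' ∧ LeafSubst B Tl Y Y') := by
  induction T generalizing S' with
  | hole => exact .inr ⟨S', rfl, h⟩
  | comL T R ih =>
    cases h with
    | comL h =>
      rcases ih h with ⟨T', rfl, hT'⟩ | ⟨Y', rfl, hY⟩
      · exact .inl ⟨.comL T' R, rfl, fun X => .comL (hT' X)⟩
      · exact .inr ⟨Y', rfl, hY⟩
    | comR h => exact .inl ⟨.comL T _, rfl, fun _ => .comR h⟩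
  | comR L T ih =>
    cases h with
    | comL h => exact .inl ⟨.comR _ T, rfl, fun _ => .comL h⟩
    | comR h =>
      rcases ih h with ⟨T', rfl, hT'⟩ | ⟨Y', rfl, hY⟩
      · exact .inl ⟨.comR L T', rfl, fun X => .comR (hT' X)⟩
      · exact .inr ⟨Y', rfl, hY⟩
  | semL T R ih =>
    cases h with
    | semL h =>
      rcases ih h with ⟨T', rfl, hT'⟩ | ⟨Y', rfl, hY⟩
      · exact .inl ⟨.semL T' R, rfl, fun X => .semL (hT' X)⟩
      · exact .inr ⟨Y', rfl, hY⟩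
    | semR h => exact .inl ⟨.semL T _, rfl, fun _ => .semR h⟩
  | semR L T ih =>
    cases h with
    | semL h => exact .inl ⟨.semR _ T, rfl, fun _ => .semL h⟩
    | semR h =>
      rcases ih h with ⟨T', rfl, hT'⟩ | ⟨Y', rfl, hY⟩
      · exact .inl ⟨.semR L T', rfl, fun X => .semR (hT' X)⟩
      · exact .inr ⟨Y', rfl, hY⟩

end LeafSubst

/-- `LeftRule D A X V`: the left rule of `A` infers `plug2 V (.fma A) ⊢ C` from `X ⊢ C`, its side
premise (for `⊸ᴸ` and `⊸ᴿ`) satisfying `D`. -/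
inductive LeftRule (D : Tr2 → Fma2 → Prop) : Fma2 → Tr2 → Ctx2 → Prop
  | I : LeftRule D .I .emp .hole
  | tL {A B : Fma2} : LeftRule D (.tL A B) (.com (.fma A) (.fma B)) .hole
  | tR {A B : Fma2} : LeftRule D (.tR A B) (.sem (.fma A) (.fma B)) .hole
  | lL {U : Tr2} {A B : Fma2} : D U A → LeftRule D (.lL A B) (.fma B) (.comL .hole U)
  | lR {U : Tr2} {A B : Fma2} : D U A → LeftRule D (.lR A B) (.fma B) (.semL .hole U)

/-- `StructStep X Y`: a structural rule infers `Y ⊢ C` from `X ⊢ C`. -/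
inductive StructStep : Tr2 → Tr2 → Prop
  | assocL {U₀ U₁ U₂ : Tr2} : StructStep (.com U₀ (.com U₁ U₂)) (.com (.com U₀ U₁) U₂)
  | assocR {U₀ U₁ U₂ : Tr2} : StructStep (.sem (.sem U₀ U₁) U₂) (.sem U₀ (.sem U₁ U₂))
  | comm {U₀ U₁ : Tr2} : StructStep (.com U₀ U₁) (.sem U₁ U₀)
  | commInv {U₀ U₁ : Tr2} : StructStep (.sem U₁ U₀) (.com U₀ U₁)
  | unitLL {U : Tr2} : StructStep U (.com .emp U)
  | unitRL {U : Tr2} : StructStep (.com U .emp) U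
  | unitLR {U : Tr2} : StructStep U (.sem U .emp)
  | unitRR {U : Tr2} : StructStep (.sem .emp U) U

theorem LeftRule.mono {D D' : Tr2 → Fma2 → Prop} (hD : ∀ {U A}, D U A → D' U A) {A : Fma2}
    {X : Tr2} {V : Ctx2} : LeftRule D A X V → LeftRule D' A X V
  | .I => .I
  | .tL => .tL
  | .tR => .tR
  | .lL h => .lL (hD h)
  | .lR h => .lR (hD h)

theorem LeftRule.leafSubst {B : Fma2} {Tl : Tr2} {D D' : Tr2 → Fma2 → Prop}
    (hD : ∀ {U A U'}, D U A → LeafSubst B Tl U U' → D' U' A) {A : Fma2} {X Y' : Tr2} {V : Ctx2}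
    (hrule : LeftRule D A X V) (hs : LeafSubst B Tl (plug2 V (.fma A)) Y') :
    (A = B ∧ Y' = plug2 V Tl) ∨ ∃ V', Y' = plug2 V' (.fma A) ∧ LeftRule D' A X V' := by
  cases hrule with
  | I | tL | tR => cases hs; exact .inl ⟨rfl, rfl⟩
  | lL hU =>
    cases hs with
    | comL hs => cases hs; exact .inl ⟨rfl, rfl⟩
    | comR hs => exact .inr ⟨.comL .hole _, rfl, .lL (hD hU hs)⟩
  | lR hU =>
    cases hs with
    | semL hs => cases hs; exact .inl ⟨rfl, rfl⟩
    | semR hs => exact .inr ⟨.semL .hole _, rfl, .lR (hD hU hs)⟩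

theorem StructStep.leafSubst {B : Fma2} {Tl X Y Y' : Tr2} (hstep : StructStep X Y)
    (hs : LeafSubst B Tl Y Y') : ∃ X', LeafSubst B Tl X X' ∧ StructStep X' Y' := by
  cases hstep with
  | assocL =>
    rcases hs with _ | (_ | hs | hs | _ | _) | hs | _ | _
    · exact ⟨_, .comL hs, .assocL⟩
    · exact ⟨_, .comR (.comL hs), .assocL⟩
    · exact ⟨_, .comR (.comR hs), .assocL⟩
  | assocR =>
    rcases hs with _ | _ | _ | hs | (_ | _ | _ | hs | hs)
    · exact ⟨_, .semL (.semL hs), .assocR⟩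
    · exact ⟨_, .semL (.semR hs), .assocR⟩
    · exact ⟨_, .semR hs, .assocR⟩
  | comm =>
    rcases hs with _ | _ | _ | hs | hs
    · exact ⟨_, .comR hs, .comm⟩
    · exact ⟨_, .comL hs, .comm⟩
  | commInv =>
    rcases hs with _ | hs | hs | _ | _
    · exact ⟨_, .semR hs, .commInv⟩
    · exact ⟨_, .semL hs, .commInv⟩
  | unitLL =>
    rcases hs with _ | hs | hs | _ | _
    · cases hs
    · exact ⟨_, hs, .unitLL⟩
  | unitRL => exact ⟨_, .comL hs, .unitRL⟩
  | unitLR =>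
    rcases hs with _ | _ | _ | hs | hs
    · exact ⟨_, hs, .unitLR⟩
    · cases hs
  | unitRR => exact ⟨_, .semR hs, .unitRR⟩

namespace BDer

theorem of_leftRule {A : Fma2} {X : Tr2} {V T : Ctx2} {C : Fma2} (hrule : LeftRule BDer A X V)
    (h : BDer (plug2 T X) C) : BDer (plug2 T (plug2 V (.fma A))) C := by
  cases hrule with
  | I => exact .IL h
  | tL => exact .tLL h
  | tR => exact .tRL h
  | lL hU => exact .lLL hU h
  | lR hU => exact .lRL hU h

theorem of_structStep {X Y : Tr2} {T : Ctx2} {C : Fma2} (hstep : StructStep X Y)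
    (h : BDer (plug2 T X) C) : BDer (plug2 T Y) C := by
  cases hstep with
  | assocL => exact .assocL h
  | assocR => exact .assocR h
  | comm => exact .comm h
  | commInv => exact .commInv h
  | unitLL => exact .unitLL h
  | unitRL => exact .unitRL h
  | unitLR => exact .unitLR h
  | unitRR => exact .unitRR h

/-- Induction on derivations with the left rules and the structural rules each taken as one
case. -/
theorem induction_leftRule {motive : (S : Tr2) → (C : Fma2) → BDer S C → Prop}
    (ax : ∀ A, motive (.fma A) A .ax)
    (IR : motive .emp .I .IR)
    (tLR : ∀ {T U A B} (h₁ : BDer T A) (h₂ : BDer U B), motive T A h₁ → motive U B h₂ →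
      motive _ _ (.tLR h₁ h₂))
    (tRR : ∀ {T U A B} (h₁ : BDer T A) (h₂ : BDer U B), motive T A h₁ → motive U B h₂ →
      motive _ _ (.tRR h₁ h₂))
    (lLR : ∀ {T A B} (h : BDer (.com T (.fma A)) B), motive _ _ h → motive _ _ (.lLR h))
    (lRR : ∀ {T A B} (h : BDer (.sem T (.fma A)) B), motive _ _ h → motive _ _ (.lRR h))
    (leftRule : ∀ {T A X V C} (hrule : LeftRule (fun U A => ∃ h, motive U A h) A X V)
      (h : BDer (plug2 T X) C), motive _ _ h →
      motive _ _ (.of_leftRule (hrule.mono fun ⟨h, _⟩ => h) h))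
    (structStep : ∀ {T X Y C} (hstep : StructStep X Y) (h : BDer (plug2 T X) C), motive _ _ h →
      motive _ _ (.of_structStep hstep h))
    {S : Tr2} {C : Fma2} (h : BDer S C) : motive S C h := by
  induction h with
  | ax => exact ax _
  | IR => exact IR
  | IL h ih => exact leftRule (V := .hole) .I h ih
  | tLL h ih => exact leftRule (V := .hole) .tL h ih
  | tLR h₁ h₂ ih₁ ih₂ => exact tLR h₁ h₂ ih₁ ih₂
  | tRL h ih => exact leftRule (V := .hole) .tR h ih
  | tRR h₁ h₂ ih₁ ih₂ => exact tRR h₁ h₂ ih₁ ih₂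
  | lLL h₁ h₂ ih₁ ih₂ => exact leftRule (V := .comL .hole _) (.lL ⟨h₁, ih₁⟩) h₂ ih₂
  | lLR h ih => exact lLR h ih
  | lRL h₁ h₂ ih₁ ih₂ => exact leftRule (V := .semL .hole _) (.lR ⟨h₁, ih₁⟩) h₂ ih₂
  | lRR h ih => exact lRR h ih
  | assocL h ih => exact structStep .assocL h ih
  | assocR h ih => exact structStep .assocR h ih
  | comm h ih => exact structStep .comm h ih
  | commInv h ih => exact structStep .commInv h ih
  | unitLL h ih => exact structStep .unitLL h ih
  | unitRL h ih => exact structStep .unitRL h ih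
  | unitLR h ih => exact structStep .unitLR h ih
  | unitRR h ih => exact structStep .unitRR h ih

end BDer

def CutAdmissible (B : Fma2) : Prop :=
  ∀ {Tl S S' : Tr2} {C : Fma2}, BDer Tl B → BDer S C → LeafSubst B Tl S S' → BDer S' C

theorem BDer.cut_principal {Tl : Tr2} {B : Fma2} (hl : BDer Tl B)
    (hcut : ∀ B', sizeOf B' < sizeOf B → CutAdmissible B') {X : Tr2} {V T : Ctx2} {C : Fma2}
    (hrule : LeftRule BDer B X V) (hr : BDer (plug2 T X) C) : BDer (plug2 T (plug2 V Tl)) C := by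
  induction hl using BDer.induction_leftRule generalizing X V T C with
  | ax => exact .of_leftRule hrule hr
  | IR => cases hrule; exact hr
  | tLR h₁ h₂ =>
    cases hrule
    have hr₁ := hcut _ (by simp +arith) h₁ hr (.plug2 (.comL .here) T)
    exact hcut _ (by simp +arith) h₂ hr₁ (.plug2 (.comR .here) T)
  | tRR h₁ h₂ =>
    cases hrule
    have hr₁ := hcut _ (by simp +arith) h₁ hr (.plug2 (.semL .here) T)
    exact hcut _ (by simp +arith) h₂ hr₁ (.plug2 (.semR .here) T)
  | lLR h =>
    rcases hrule with _ | _ | _ | hU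
    exact hcut _ (by simp +arith) (hcut _ (by simp +arith) hU h (.comR .here)) hr (.plug2 .here T)
  | lRR h =>
    rcases hrule with _ | _ | _ | _ | hU
    exact hcut _ (by simp +arith) (hcut _ (by simp +arith) hU h (.semR .here)) hr (.plug2 .here T)
  | leftRule hrule' _ ih =>
    simpa only [plug2_comp] using BDer.of_leftRule (T := (T.comp V).comp _) (hrule'.mono fun ⟨h, _⟩ => h)
      (by simpa only [plug2_comp] using ih hcut hrule hr)
  | structStep hstep _ ih =>
    simpa only [plug2_comp] using BDer.of_structStep (T := (T.comp V).comp _) hstep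
      (by simpa only [plug2_comp] using ih hcut hrule hr)

theorem cutAdmissible_of_lt {B : Fma2} (hcut : ∀ B', sizeOf B' < sizeOf B → CutAdmissible B') :
    CutAdmissible B := by
  intro Tl S S' C hl hr hs
  induction hr using BDer.induction_leftRule generalizing S' with
  | ax => cases hs; exact hl
  | IR => cases hs
  | tLR h₁ h₂ ih₁ ih₂ =>
    rcases hs with _ | hs | hs | _ | _
    · exact .tLR (ih₁ hs) h₂
    · exact .tLR h₁ (ih₂ hs)
  | tRR h₁ h₂ ih₁ ih₂ =>
    rcases hs with _ | _ | _ | hs | hs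
    · exact .tRR (ih₁ hs) h₂
    · exact .tRR h₁ (ih₂ hs)
  | lLR _ ih => exact .lLR (ih (.comL hs))
  | lRR _ ih => exact .lRR (ih (.semL hs))
  | leftRule hrule h ih =>
    have hrule₀ := hrule.mono fun ⟨h, _⟩ => h
    rcases hs.plug2_cases with ⟨T', rfl, hT'⟩ | ⟨Y', rfl, hY⟩
    · exact .of_leftRule hrule₀ (ih (hT' _))
    · rcases hrule.leafSubst (fun ⟨_, ihU⟩ hsU => ihU hsU) hY with ⟨rfl, rfl⟩ | ⟨V', rfl, hrule'⟩
      · exact hl.cut_principal hcut hrule₀ h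
      · exact .of_leftRule hrule' h
  | structStep hstep h ih =>
    rcases hs.plug2_cases with ⟨T', rfl, hT'⟩ | ⟨Y', rfl, hY⟩
    · exact .of_structStep hstep (ih (hT' _))
    · obtain ⟨X', hX, hstep'⟩ := hstep.leafSubst hY
      exact .of_structStep hstep' (ih (hX.plug2 _))

theorem cutAdmissible (B : Fma2) : CutAdmissible B :=
  cutAdmissible_of_lt fun B' _ => cutAdmissible B'
termination_by sizeOf B

theorem BDer.of_aDer {A C : Fma2} (h : ADer A C) : BDer (.fma A) C := by
  induction h with
  | id => exact .ax
  | comp _ _ ih₁ ih₂ => exact cutAdmissible _ ih₁ ih₂ .here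
  | tensL _ _ ih₁ ih₂ => exact .tLL (T := .hole) (.tLR ih₁ ih₂)
  | lolliL _ _ ih₁ ih₂ => exact .lLR (.lLL (T := .hole) ih₁ ih₂)
  | lolliR _ _ ih₁ ih₂ => exact .lRR (.lRL (T := .hole) ih₁ ih₂)
  | lam => exact .tLL (T := .hole) (.IL (T := .comL .hole _) (.unitLL (T := .hole) .ax))
  | rho => exact .unitRL (T := .hole) (.tLR .ax .IR)
  | alpha =>
    exact .tLL (T := .hole) (.tLL (T := .comL .hole _)
      (.assocL (T := .hole) (.tLR .ax (.tLR .ax .ax))))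
  | gamma => exact .tLL (T := .hole) (.commInv (T := .hole) (.tRR .ax .ax))
  | gammaInv => exact .tRL (T := .hole) (.comm (T := .hole) (.tLR .ax .ax))
  | pi _ ih => exact .lLR (cutAdmissible _ (.tLR .ax .ax) ih .here)
  | piInv _ ih =>
    exact .tLL (T := .hole) (cutAdmissible _ ih (.lLL (T := .hole) .ax .ax) (.comL .here))
  | piR _ ih => exact .lRR (cutAdmissible _ (.tRR .ax .ax) ih .here)
  | piRInv _ ih =>
    exact .tRL (T := .hole) (cutAdmissible _ ih (.lRL (T := .hole) .ax .ax) (.semL .here))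

namespace ADer

theorem tensR {A B C D : Fma2} (h₁ : ADer A C) (h₂ : ADer B D) : ADer (.tR A B) (.tR C D) :=
  gammaInv.comp ((tensL h₂ h₁).comp gamma)

theorem sharp_plug2 {X Y : Tr2} (h : ADer X.sharp Y.sharp) :
    ∀ T : Ctx2, ADer (plug2 T X).sharp (plug2 T Y).sharp
  | .hole => h
  | .comL T _ => tensL (sharp_plug2 h T) id
  | .comR _ T => tensL id (sharp_plug2 h T)
  | .semL T _ => tensR (sharp_plug2 h T) id
  | .semR _ T => tensR id (sharp_plug2 h T)

theorem sharp_of_leftRule {D : Tr2 → Fma2 → Prop} (hD : ∀ {U A}, D U A → ADer U.sharp A)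
    {A : Fma2} {X : Tr2} {V : Ctx2} : LeftRule D A X V → ADer (plug2 V (.fma A)).sharp X.sharp
  | .I | .tL | .tR => id
  | .lL hU => (tensL id (hD hU)).comp (piInv id)
  | .lR hU => (tensR id (hD hU)).comp (piRInv id)

theorem sharp_of_structStep {X Y : Tr2} : StructStep X Y → ADer Y.sharp X.sharp
  | .assocL => alpha
  | .assocR =>
    gammaInv.comp <| (tensL gammaInv id).comp <| alpha.comp <| (tensL id gamma).comp gamma
  | .comm => gammaInv
  | .commInv => gamma
  | .unitLL => lam
  | .unitRL => rho
  | .unitLR => gammaInv.comp lam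
  | .unitRR => rho.comp gamma

theorem sharp_of_bDer {T : Tr2} {C : Fma2} (h : BDer T C) : ADer T.sharp C := by
  induction h using BDer.induction_leftRule with
  | ax | IR => exact id
  | tLR _ _ ih₁ ih₂ => exact tensL ih₁ ih₂
  | tRR _ _ ih₁ ih₂ => exact tensR ih₁ ih₂
  | lLR _ ih => exact pi ih
  | lRR _ ih => exact piR ih
  | leftRule hrule _ ih =>
    exact (sharp_plug2 (sharp_of_leftRule (fun ⟨_, ih⟩ => ih) hrule) _).comp ih
  | structStep hstep _ ih => exact (sharp_plug2 (sharp_of_structStep hstep) _).comp ih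

end ADer

/-- Equivalence of SkMBiCA and SkMBiCT. -/
theorem SkMBiCA_equiv_SkMBiCT :
    (∀ A C : Fma2, ADer A C → BDer (Tr2.fma A) C) ∧
    (∀ (T : Tr2) (C : Fma2), BDer T C → ADer T.sharp C) :=
  ⟨fun _ _ => BDer.of_aDer, fun _ _ => ADer.sharp_of_bDer⟩
end
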